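/- Let S be a finite E(S)-Ehresmann semigroup (i.e., E-Ehresmann with E = E(S)). Then the associated Ehresmann category C is an EI-category: every endomorphism monoid in C is a group. -/

import Mathlib

/-- An E-Ehresmann semigroup as a (2,1,1)-algebra. -/
class EhresmannSemigroup (S : Type*) extends Semigroup S where
  plus : S → S
  estar : S → S
  plus_mul_self : ∀ x : S, plus x * x = x
  plus_prod_idem : ∀ x y : S, plus (plus x * plus y) = plus x * plus y
  plus_comm : ∀ x y : S, plus x * plus y = plus y * plus x
  plus_absorb : ∀ x y : S, plus x * plus (x * y) = plus (x * y)
  plus_mul_plus : ∀ x y : S, plus (x * y) = plus (x * plus y)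
  mul_estar_self : ∀ x : S, x * estar x = x
  estar_prod_idem : ∀ x y : S, estar (estar x * estar y) = estar x * estar y
  estar_comm : ∀ x y : S, estar x * estar y = estar y * estar x
  estar_absorb : ∀ x y : S, estar (x * y) * estar y = estar (x * y)
  estar_mul_estar : ∀ x y : S, estar (x * y) = estar (estar x * y)
  estar_plus : ∀ x : S, estar (plus x) = plus x
  plus_estar : ∀ x : S, plus (estar x) = estar x

open EhresmannSemigroup

/-- The distinguished semilattice `E` of an `E`-Ehresmann semigroup. -/
def eE (S : Type*) [EhresmannSemigroup S] : Set S := Set.range (plus : S → S)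

/-- The partial order `≤_r` : `a ≤_r b` iff `a = a⁺ b`. -/
def leR {S : Type*} [EhresmannSemigroup S] (a b : S) : Prop := a = plus a * b

/-- The partial order `≤_l` : `a ≤_l b` iff `a = b a*`. -/
def leL {S : Type*} [EhresmannSemigroup S] (a b : S) : Prop := a = b * estar a

/-- Green's `R` relation on a semigroup. -/
def rRel {S : Type*} [Semigroup S] (a b : S) : Prop :=
  (a = b ∨ ∃ x, a * x = b) ∧ (b = a ∨ ∃ x, b * x = a)

/-- Green's `L` relation on a semigroup. -/
def lRel {S : Type*} [Semigroup S] (a b : S) : Prop :=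
  (a = b ∨ ∃ x, x * a = b) ∧ (b = a ∨ ∃ x, x * b = a)

/-- Green's `D` relation on a semigroup. -/
def dRel {S : Type*} [Semigroup S] (a b : S) : Prop := ∃ c, rRel a c ∧ lRel c b

/-- The set `Reg_E(S)` of elements corresponding to invertible morphisms. -/
def regE (S : Type*) [EhresmannSemigroup S] : Set S :=
  {a | rRel a (plus a) ∧ lRel a (estar a)}

/-- `C(a)` is an invertible morphism of the associated Ehresmann category. -/
def invertibleC {S : Type*} [EhresmannSemigroup S] (a : S) : Prop :=
  ∃ b, plus b = estar a ∧ estar b = plus a ∧ a * b = plus a ∧ b * a = estar a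

open EhresmannSemigroup

/-!
An endomorphism monoid of the associated category is finite, and its only idempotent is its
identity, because every idempotent lies in `E` and is therefore fixed by `⁺`. In a finite
monoid the subsemigroup `M a` contains an idempotent `y a`; when `1` is the only idempotent,
`y` is a left inverse of `a`, hence an inverse since finite monoids are Dedekind-finite.
-/

theorem exists_idempotent_in_finite_subsemigroup {M : Type*} [Semigroup M] {s : Set M}
    (hs : s.Finite) (hne : s.Nonempty) (hmul : ∀ x ∈ s, ∀ y ∈ s, x * y ∈ s) :
    ∃ m ∈ s, m * m = m := by
  let _ : TopologicalSpace M := ⊥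
  have : DiscreteTopology M := ⟨rfl⟩
  exact exists_idempotent_in_compact_subsemigroup (fun _ => continuous_of_discreteTopology) s hne
    hs.isCompact hmul

theorem isUnit_of_forall_isIdempotentElem_eq_one {M : Type*} [Monoid M] [Finite M]
    (h : ∀ m : M, IsIdempotentElem m → m = 1) (a : M) : IsUnit a := by
  have hmul : ∀ x ∈ Set.range (· * a), ∀ y ∈ Set.range (· * a), x * y ∈ Set.range (· * a) := by
    rintro _ ⟨x, rfl⟩ _ ⟨y, rfl⟩
    exact ⟨x * a * y, by simp only [mul_assoc]⟩
  obtain ⟨_, ⟨y, rfl⟩, hidem⟩ :=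
    exists_idempotent_in_finite_subsemigroup (Set.toFinite _) (Set.range_nonempty _) hmul
  exact IsUnit.of_mul_eq_one_right y (h _ hidem)

namespace EhresmannSemigroup

variable {S : Type*} [EhresmannSemigroup S]

theorem plus_plus (x : S) : plus (plus x) = plus x := by
  simpa only [estar_plus] using plus_estar (plus x)

theorem plus_eq_self_of_mem_eE {e : S} (he : e ∈ eE S) : plus e = e := by
  obtain ⟨x, rfl⟩ := he
  exact plus_plus x

theorem estar_eq_self_of_mem_eE {e : S} (he : e ∈ eE S) : estar e = e := by
  obtain ⟨x, rfl⟩ := he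
  exact estar_plus x

theorem plus_mul_of_estar_eq_plus {x y : S} (h : estar x = plus y) : plus (x * y) = plus x := by
  rw [plus_mul_plus, ← h, mul_estar_self]

theorem estar_mul_of_estar_eq_plus {x y : S} (h : estar x = plus y) : estar (x * y) = estar y := by
  rw [estar_mul_estar, h, plus_mul_self]

abbrev EndC (e : eE S) : Type _ := {a : S // plus a = e ∧ estar a = e}

instance (e : eE S) : Monoid (EndC e) where
  mul x y := ⟨x.1 * y.1,
    by rw [plus_mul_of_estar_eq_plus (x.2.2.trans y.2.1.symm), x.2.1],
    by rw [estar_mul_of_estar_eq_plus (x.2.2.trans y.2.1.symm), y.2.2]⟩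
  mul_assoc x y z := Subtype.ext (mul_assoc x.1 y.1 z.1)
  one := ⟨e, plus_eq_self_of_mem_eE e.2, estar_eq_self_of_mem_eE e.2⟩
  one_mul x := Subtype.ext <| (congrArg (· * x.1) x.2.1.symm).trans (plus_mul_self x.1)
  mul_one x := Subtype.ext <| (congrArg (x.1 * ·) x.2.2.symm).trans (mul_estar_self x.1)

theorem EndC.eq_one_of_isIdempotentElem (hE : {x : S | x * x = x} ⊆ eE S) {e : eE S}
    {x : EndC e} (hx : IsIdempotentElem x) : x = 1 :=
  Subtype.ext <| (plus_eq_self_of_mem_eE (hE (congrArg Subtype.val hx))).symm.trans x.2.1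

theorem EndC.invertibleC_of_isUnit {e : eE S} {x : EndC e} (hx : IsUnit x) : invertibleC x.1 := by
  obtain ⟨y, hxy, hyx⟩ := isUnit_iff_exists.mp hx
  exact ⟨y.1, y.2.1.trans x.2.2.symm, y.2.2.trans x.2.1.symm,
    (congrArg Subtype.val hxy).trans x.2.1.symm, (congrArg Subtype.val hyx).trans x.2.2.symm⟩

end EhresmannSemigroup

/-- Let `S` be a finite `E(S)`-Ehresmann semigroup, i.e. an
E-Ehresmann semigroup with `E = E(S)`.  Then the associated Ehresmann category
is an EI-category: every endomorphism (`a` with `a⁺ = a*`) is an isomorphism. -/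
theorem finite_ES_Ehresmann_is_EI (S : Type*) [EhresmannSemigroup S] [Fintype S]
    (hE : eE S = {e : S | e * e = e}) :
    ∀ a : S, plus a = estar a → invertibleC a := by
  intro a ha
  let x : EndC (⟨plus a, a, rfl⟩ : eE S) := ⟨a, rfl, ha.symm⟩
  exact EndC.invertibleC_of_isUnit <| isUnit_of_forall_isIdempotentElem_eq_one
    (fun _ => EndC.eq_one_of_isIdempotentElem hE.superset) x
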